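/- Let g(t) = h(t)·Φ((b−t)/a) where h is nonconstant, nondecreasing, concave, and differentiable on [t₀, t₁], a > 0, b ∈ ℝ. If a·(1−Φ((t₀−b)/a))/φ((t₀−b)/a) ≤ h(t₀)/h'(t₀), then g is strictly decreasing on [t₀, t₁]. -/

import Mathlib

/-- The density of the standard normal distribution. -/
noncomputable def stdGaussianPDF (x : ℝ) : ℝ :=
  (Real.sqrt (2 * Real.pi))⁻¹ * Real.exp (-(x ^ 2) / 2)

/-- The cumulative distribution function of the standard normal distribution. -/
noncomputable def stdGaussianCDF (x : ℝ) : ℝ :=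
  ∫ t in Set.Iic x, stdGaussianPDF t

/-!
Write `u = (t - b) / a` and let `m u = (1 - Φ u) / φ u` be the Mills ratio. As
`Φ (-u) = 1 - Φ u`, we get `g' t = φ u / a * (a * h' t * m u - h t)`. The Mills ratio is strictly
decreasing: `m' u = u * m u - 1` and `φ u - u * (1 - Φ u) = ∫_u^∞ (s - u) φ s ds > 0`.
Concavity gives `h' t ≤ h' t₀` and monotonicity `h t₀ ≤ h t`, so for `t > t₀`
`a h'(t) m(u_t) ≤ a h'(t₀) m(u_t) < a h'(t₀) m(u_{t₀}) ≤ h(t₀) ≤ h(t)`,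
the third step being the hypothesis on `t₀`.
-/

open Set MeasureTheory ProbabilityTheory Filter Topology

lemma setIntegral_Ioi_pos {f : ℝ → ℝ} {x : ℝ} (hf : ∀ t ∈ Ioi x, 0 < f t)
    (hfi : IntegrableOn f (Ioi x)) : 0 < ∫ t in Ioi x, f t := by
  rw [setIntegral_pos_iff_support_of_nonneg_ae
    (ae_restrict_of_forall_mem measurableSet_Ioi fun t ht => (hf t ht).le) hfi,
    inter_eq_right.2 fun t ht => Function.mem_support.2 (hf t ht).ne']
  simp

lemma ConcaveOn.le_of_hasDerivWithinAt_of_lt {S : Set ℝ} {f : ℝ → ℝ} {f'x f'y x y : ℝ}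
    (hfc : ConcaveOn ℝ S f) (hx : x ∈ S) (hy : y ∈ S) (hxy : x < y)
    (hfx : HasDerivWithinAt f f'x S x) (hfy : HasDerivWithinAt f f'y S y) : f'y ≤ f'x :=
  (hfc.le_slope_of_hasDerivWithinAt hx hy hxy hfy).trans
    (hfc.slope_le_of_hasDerivWithinAt hx hy hxy hfx)

lemma stdGaussianPDF_eq_gaussianPDFReal : stdGaussianPDF = gaussianPDFReal 0 1 := by
  ext x
  simp [stdGaussianPDF, gaussianPDFReal]

lemma stdGaussianPDF_pos (x : ℝ) : 0 < stdGaussianPDF x := by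
  unfold stdGaussianPDF; positivity

lemma stdGaussianPDF_neg (x : ℝ) : stdGaussianPDF (-x) = stdGaussianPDF x := by
  rw [stdGaussianPDF, neg_sq, stdGaussianPDF]

lemma integrable_stdGaussianPDF : Integrable stdGaussianPDF :=
  stdGaussianPDF_eq_gaussianPDFReal ▸ integrable_gaussianPDFReal 0 1

lemma integral_stdGaussianPDF : ∫ x, stdGaussianPDF x = 1 :=
  stdGaussianPDF_eq_gaussianPDFReal ▸ integral_gaussianPDFReal_eq_one 0 one_ne_zero

lemma hasDerivAt_stdGaussianPDF (x : ℝ) :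
    HasDerivAt stdGaussianPDF (-(x * stdGaussianPDF x)) x := by
  have h := (((hasDerivAt_pow 2 x).neg.div_const 2).exp).const_mul (√(2 * Real.pi))⁻¹
  refine h.congr_deriv ?_
  simp only [stdGaussianPDF, Pi.neg_apply]
  ring

lemma continuous_stdGaussianPDF : Continuous stdGaussianPDF :=
  continuous_iff_continuousAt.2 fun x => (hasDerivAt_stdGaussianPDF x).continuousAt

lemma tendsto_stdGaussianPDF_atTop : Tendsto stdGaussianPDF atTop (𝓝 0) := by
  have h : Tendsto (fun x : ℝ => -(x ^ 2) / 2) atTop atBot :=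
    (tendsto_neg_atTop_atBot.comp (tendsto_pow_atTop two_ne_zero)).atBot_div_const two_pos
  have h' := (Real.tendsto_exp_atBot.comp h).const_mul (√(2 * Real.pi))⁻¹
  rwa [mul_zero] at h'

lemma integrable_mul_stdGaussianPDF : Integrable fun t : ℝ => t * stdGaussianPDF t := by
  have h := (integrable_mul_exp_neg_mul_sq (b := 1 / 2) (by norm_num)).const_mul
    (√(2 * Real.pi))⁻¹
  refine h.congr (ae_of_all _ fun x => ?_)
  simp only [stdGaussianPDF]
  ring_nf

lemma integral_Ioi_mul_stdGaussianPDF (x : ℝ) :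
    ∫ t in Ioi x, t * stdGaussianPDF t = stdGaussianPDF x := by
  have h := integral_Ioi_of_hasDerivAt_of_tendsto' (a := x) (m := 0)
    (f := fun t => -stdGaussianPDF t) (f' := fun t => t * stdGaussianPDF t)
    (fun t _ => (hasDerivAt_stdGaussianPDF t).neg.congr_deriv (neg_neg _))
    integrable_mul_stdGaussianPDF.integrableOn (by simpa using tendsto_stdGaussianPDF_atTop.neg)
  rw [h, zero_sub, neg_neg]

lemma hasDerivAt_stdGaussianCDF (x : ℝ) : HasDerivAt stdGaussianCDF (stdGaussianPDF x) x := by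
  have hsplit : ∀ u,
      stdGaussianCDF u = stdGaussianCDF 0 + ∫ t in (0 : ℝ)..u, stdGaussianPDF t := by
    intro u
    rw [← intervalIntegral.integral_Iic_sub_Iic integrable_stdGaussianPDF.integrableOn
      integrable_stdGaussianPDF.integrableOn, stdGaussianCDF, stdGaussianCDF]
    ring
  rw [funext hsplit]
  exact ((continuous_stdGaussianPDF.integral_hasStrictDerivAt 0 x).hasDerivAt).const_add _

lemma continuous_stdGaussianCDF : Continuous stdGaussianCDF :=
  continuous_iff_continuousAt.2 fun x => (hasDerivAt_stdGaussianCDF x).continuousAt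

lemma integral_Ioi_stdGaussianPDF (x : ℝ) :
    ∫ t in Ioi x, stdGaussianPDF t = 1 - stdGaussianCDF x := by
  have hI := integrable_stdGaussianPDF.integrableOn (s := Iic x)
  have h := integral_stdGaussianPDF
  rw [← setIntegral_univ, ← Iic_union_Ioi (a := x), setIntegral_union (Iic_disjoint_Ioi le_rfl)
    measurableSet_Ioi hI integrable_stdGaussianPDF.integrableOn] at h
  rw [stdGaussianCDF]
  linarith

lemma stdGaussianCDF_neg (x : ℝ) : stdGaussianCDF (-x) = 1 - stdGaussianCDF x := by
  calc stdGaussianCDF (-x) = ∫ t in Iic (-x), stdGaussianPDF (-t) := by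
        simp only [stdGaussianPDF_neg, stdGaussianCDF]
    _ = ∫ t in Ioi x, stdGaussianPDF t := by rw [integral_comp_neg_Iic, neg_neg]
    _ = 1 - stdGaussianCDF x := integral_Ioi_stdGaussianPDF x

lemma one_sub_stdGaussianCDF_pos (x : ℝ) : 0 < 1 - stdGaussianCDF x :=
  integral_Ioi_stdGaussianPDF x ▸
    setIntegral_Ioi_pos (fun t _ => stdGaussianPDF_pos t) integrable_stdGaussianPDF.integrableOn

lemma mul_one_sub_stdGaussianCDF_lt (x : ℝ) : x * (1 - stdGaussianCDF x) < stdGaussianPDF x := by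
  have h : ∫ t in Ioi x, (t - x) * stdGaussianPDF t
      = stdGaussianPDF x - x * (1 - stdGaussianCDF x) := by
    simp_rw [sub_mul]
    rw [integral_sub integrable_mul_stdGaussianPDF.integrableOn
      (integrable_stdGaussianPDF.const_mul x).integrableOn, integral_const_mul,
      integral_Ioi_mul_stdGaussianPDF, integral_Ioi_stdGaussianPDF]
  have hpos : 0 < ∫ t in Ioi x, (t - x) * stdGaussianPDF t :=
    setIntegral_Ioi_pos (fun t ht => mul_pos (sub_pos.2 ht) (stdGaussianPDF_pos t))
      (((integrable_mul_stdGaussianPDF.sub (integrable_stdGaussianPDF.const_mul x)).integrableOn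
        (s := Ioi x)).congr_fun (fun t _ => (sub_mul t x _).symm) measurableSet_Ioi)
  linarith

noncomputable def millsRatio (x : ℝ) : ℝ :=
  (1 - stdGaussianCDF x) / stdGaussianPDF x

lemma millsRatio_pos (x : ℝ) : 0 < millsRatio x :=
  div_pos (one_sub_stdGaussianCDF_pos x) (stdGaussianPDF_pos x)

lemma hasDerivAt_millsRatio (x : ℝ) : HasDerivAt millsRatio (x * millsRatio x - 1) x := by
  have h := ((hasDerivAt_stdGaussianCDF x).const_sub 1).div (hasDerivAt_stdGaussianPDF x)
    (stdGaussianPDF_pos x).ne'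
  refine h.congr_deriv ?_
  have hφ := (stdGaussianPDF_pos x).ne'
  rw [millsRatio]
  field_simp
  ring

lemma strictAnti_millsRatio : StrictAnti millsRatio := by
  refine strictAnti_of_deriv_neg fun x => ?_
  rw [(hasDerivAt_millsRatio x).deriv, sub_neg, millsRatio, ← mul_div_assoc,
    div_lt_one (stdGaussianPDF_pos x)]
  exact mul_one_sub_stdGaussianCDF_lt x

lemma hasDerivAt_mul_stdGaussianCDF_div {h : ℝ → ℝ} {h't a b t : ℝ} (ha : a ≠ 0)
    (hh : HasDerivAt h h't t) :
    HasDerivAt (fun s => h s * stdGaussianCDF ((b - s) / a))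
      (stdGaussianPDF ((t - b) / a) / a * (a * h't * millsRatio ((t - b) / a) - h t)) t := by
  have hu : HasDerivAt (fun s => (b - s) / a) (-1 / a) t := by
    simpa using ((hasDerivAt_id t).const_sub b).div_const a
  refine (hh.mul ((hasDerivAt_stdGaussianCDF _).comp t hu)).congr_deriv ?_
  have hneg : (b - t) / a = -((t - b) / a) := by ring
  have hφ := (stdGaussianPDF_pos ((t - b) / a)).ne'
  rw [Function.comp_apply, hneg, stdGaussianCDF_neg, stdGaussianPDF_neg, millsRatio]
  field_simp
  ring

theorem strictAntiOn_of_mills_le_general (h h' : ℝ → ℝ) (a b t₀ t₁ : ℝ)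
    (ha : 0 < a)
    (hderiv : ∀ t ∈ Set.Icc t₀ t₁, HasDerivWithinAt h (h' t) (Set.Icc t₀ t₁) t)
    (hmono : MonotoneOn h (Set.Icc t₀ t₁))
    (hconc : ConcaveOn ℝ (Set.Icc t₀ t₁) h)
    (hd0 : 0 < h' t₀)
    (hcond : a * (1 - stdGaussianCDF ((t₀ - b) / a)) / stdGaussianPDF ((t₀ - b) / a)
        ≤ h t₀ / h' t₀) :
    StrictAntiOn (fun t => h t * stdGaussianCDF ((b - t) / a)) (Set.Icc t₀ t₁) := by
  rw [mul_div_assoc, ← millsRatio, le_div_iff₀ hd0, mul_right_comm] at hcond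
  refine strictAntiOn_of_deriv_neg (convex_Icc t₀ t₁) (fun t ht => ?_) fun t ht => ?_
  · exact ((hderiv t ht).continuousWithinAt).mul
      (continuous_stdGaussianCDF.comp (by fun_prop)).continuousWithinAt
  rw [interior_Icc] at ht
  have ht' : t ∈ Icc t₀ t₁ := Ioo_subset_Icc_self ht
  have ht₀ : t₀ ∈ Icc t₀ t₁ := ⟨le_rfl, ht'.1.trans ht'.2⟩
  rw [(hasDerivAt_mul_stdGaussianCDF_div ha.ne' ((hderiv t ht').hasDerivAt
    (Icc_mem_nhds ht.1 ht.2))).deriv]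
  refine mul_neg_of_pos_of_neg (div_pos (stdGaussianPDF_pos _) ha) (sub_neg.2 ?_)
  calc a * h' t * millsRatio ((t - b) / a)
      ≤ a * h' t₀ * millsRatio ((t - b) / a) := by
        gcongr
        · exact (millsRatio_pos _).le
        · exact hconc.le_of_hasDerivWithinAt_of_lt ht₀ ht' ht.1 (hderiv t₀ ht₀)
            (hderiv t ht')
    _ < a * h' t₀ * millsRatio ((t₀ - b) / a) := by
        gcongr
        exact strictAnti_millsRatio (by gcongr; exact ht.1)
    _ ≤ h t₀ := hcond
    _ ≤ h t := hmono ht₀ ht' ht.1.le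

/-- If `a·(1−Φ((t₀−b)/a))/φ((t₀−b)/a) ≤ h(t₀)/h'(t₀)`, then `g(t) = h(t)·Φ((b−t)/a)` is
strictly decreasing on `[t₀, t₁]`, for `h` nonconstant, nondecreasing, concave and
differentiable on `[t₀, t₁]`, `a > 0`. -/
theorem strictAntiOn_of_mills_le (h h' : ℝ → ℝ) (a b t₀ t₁ : ℝ)
    (ht : t₀ < t₁) (ha : 0 < a)
    (hderiv : ∀ t ∈ Set.Icc t₀ t₁, HasDerivWithinAt h (h' t) (Set.Icc t₀ t₁) t)
    (hmono : MonotoneOn h (Set.Icc t₀ t₁))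
    (hconc : ConcaveOn ℝ (Set.Icc t₀ t₁) h)
    (hnonconst : ¬ ∀ s ∈ Set.Icc t₀ t₁, ∀ t ∈ Set.Icc t₀ t₁, h s = h t)
    (hd0 : 0 < h' t₀)
    (hcond : a * (1 - stdGaussianCDF ((t₀ - b) / a)) / stdGaussianPDF ((t₀ - b) / a)
        ≤ h t₀ / h' t₀) :
    StrictAntiOn (fun t => h t * stdGaussianCDF ((b - t) / a)) (Set.Icc t₀ t₁) :=
  strictAntiOn_of_mills_le_general h h' a b t₀ t₁ ha hderiv hmono hconc hd0 hcond
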